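/- arXiv:1909.08828 — 3 statements merged into one kernel-verified Lean document; each statement's English description precedes it below -/
import Mathlib

section
/- Let $V_1$ be a continuous function on $\mathbb{R}^N$ with $V_1(x) > 1$ for all $x$ with $t \le |x| \le R$, for every $R > t$ (i.e., $V_1 > 1$ outside the ball $B_t(0)$). Then the problem $-\Delta u = V_1(x) u$, $u > 0$ in $\mathbb{R}^N$, has no classical solution. -/
/-!
On a cube `Q` of side `π / ε` the product `w x = ∏ i, cos (ε * (x i - c i))` is positive inside,
vanishes on the boundary and satisfies `-Δw = N ε² w` with `N ε² < 1`. Place `Q` outside the ball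
of radius `t` and let `x₀` maximise `w / u` on `Q`; then `x₀` is interior, and
`g = w x₀ • u - u x₀ • w` has a local minimum at `x₀`, so `0 ≤ Δg x₀ = w x₀ u x₀ (N ε² - V₁ x₀) < 0`.
-/

open MeasureTheory Real Asymptotics
open scoped InnerProductSpace

noncomputable def laplacian {N : ℕ} (u : EuclideanSpace ℝ (Fin N) → ℝ)
    (x : EuclideanSpace ℝ (Fin N)) : ℝ :=
  ∑ i, iteratedFDeriv ℝ 2 u x ![EuclideanSpace.single i 1, EuclideanSpace.single i 1]

open Filter Topology

lemma deriv_deriv_nonneg_of_isLocalMin {f : ℝ → ℝ} {a : ℝ} (hf : ContinuousAt f a)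
    (h : IsLocalMin f a) : 0 ≤ deriv (deriv f) a := by
  by_contra! hneg
  have hconst : f =ᶠ[𝓝 a] fun _ => f a :=
    ((isLocalMax_of_deriv_deriv_neg hneg h.deriv_eq_zero hf).and h).mono
      fun x hx => le_antisymm hx.1 hx.2
  have hderiv : deriv f =ᶠ[𝓝 a] fun _ => 0 :=
    hconst.eventuallyEq_nhds.mono fun x hx => by rw [hx.deriv_eq, deriv_const]
  rw [hderiv.deriv_eq, deriv_const] at hneg
  exact lt_irrefl 0 hneg

lemma deriv_deriv_cos_const_add_mul_mul (a ε C : ℝ) :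
    deriv (deriv fun s => cos (a + ε * s) * C) 0 = -(ε ^ 2 * (cos a * C)) := by
  have haff (s : ℝ) : HasDerivAt (fun s => a + ε * s) ε s := by
    simpa using ((hasDerivAt_id s).const_mul ε).const_add a
  have h1 (s : ℝ) : HasDerivAt (fun s => cos (a + ε * s) * C) (-sin (a + ε * s) * ε * C) s :=
    (haff s).cos.mul_const C
  have h2 : HasDerivAt (fun s => -sin (a + ε * s) * ε * C) (-(cos (a + ε * 0) * ε) * ε * C) 0 :=
    ((haff 0).sin.neg.mul_const ε).mul_const C
  rw [funext fun s => (h1 s).deriv, h2.deriv]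
  simp only [mul_zero, add_zero]
  ring

section LineRestriction

variable {E : Type*} [NormedAddCommGroup E] [NormedSpace ℝ E]

lemma iteratedFDeriv_two_apply_eq_deriv_deriv_line {f : E → ℝ} (hf : ContDiff ℝ 2 f) (x v : E) :
    iteratedFDeriv ℝ 2 f x ![v, v] = deriv (deriv fun s : ℝ => f (x + s • v)) 0 := by
  have hline : (fun s : ℝ => f (x + s • v)) =
      (fun z => f (x + z)) ∘ ContinuousLinearMap.smulRight (1 : ℝ →L[ℝ] ℝ) v := rfl
  have hshift : ContDiff ℝ 2 fun z => f (x + z) := hf.comp (contDiff_const.add contDiff_id)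
  have hiter : deriv (deriv fun s : ℝ => f (x + s • v)) 0 =
      iteratedDeriv 2 (fun s : ℝ => f (x + s • v)) 0 := by
    simp [iteratedDeriv_eq_iterate]
  rw [hiter, iteratedDeriv_eq_iteratedFDeriv, hline,
    ContinuousLinearMap.iteratedFDeriv_comp_right _ hshift _ le_rfl,
    iteratedFDeriv_comp_add_left]
  simp only [ContinuousMultilinearMap.compContinuousLinearMap_apply,
    ContinuousLinearMap.smulRight_apply, one_apply_eq_self, one_smul, map_zero, add_zero]
  congr 1
  ext i
  fin_cases i <;> rfl

lemma iteratedFDeriv_two_nonneg_of_isLocalMin {f : E → ℝ} {x : E} (hf : ContDiff ℝ 2 f)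
    (h : IsLocalMin f x) (v : E) : 0 ≤ iteratedFDeriv ℝ 2 f x ![v, v] := by
  rw [iteratedFDeriv_two_apply_eq_deriv_deriv_line hf]
  have hline : Continuous fun s : ℝ => x + s • v := by fun_prop
  refine deriv_deriv_nonneg_of_isLocalMin (hf.continuous.comp hline).continuousAt ?_
  have h0 : IsLocalMin f (x + (0 : ℝ) • v) := by simpa using h
  exact h0.comp_continuous (g := fun s : ℝ => x + s • v) hline.continuousAt

end LineRestriction

lemma exists_isLocalMin_mul_sub_mul {X : Type*} [TopologicalSpace X] {K U : Set X}
    (hK : IsCompact K) (hU : IsOpen U) (hUK : U ⊆ K) {u w : X → ℝ} (hu : ContinuousOn u K)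
    (hw : ContinuousOn w K) (hupos : ∀ x ∈ K, 0 < u x) (hw_nonpos : ∀ x ∈ K \ U, w x ≤ 0)
    {c : X} (hc : c ∈ K) (hwc : 0 < w c) :
    ∃ x₀ ∈ U, 0 < w x₀ ∧ IsLocalMin (fun y => w x₀ * u y - u x₀ * w y) x₀ := by
  obtain ⟨x₀, hx₀K, hmax⟩ :=
    hK.exists_isMaxOn ⟨c, hc⟩ (hw.div hu fun x hx => (hupos x hx).ne')
  have hwx₀ : 0 < w x₀ := by
    have hratio : 0 < w x₀ / u x₀ := (div_pos hwc (hupos c hc)).trans_le (hmax hc)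
    exact (div_pos_iff_of_pos_right (hupos x₀ hx₀K)).1 hratio
  have hx₀U : x₀ ∈ U := by
    by_contra hx₀U
    exact (hw_nonpos x₀ ⟨hx₀K, hx₀U⟩).not_gt hwx₀
  refine ⟨x₀, hx₀U, hwx₀, ?_⟩
  filter_upwards [hU.mem_nhds hx₀U] with y hy
  have hratio : w y / u y ≤ w x₀ / u x₀ := hmax (hUK hy)
  rw [div_le_div_iff₀ (hupos y (hUK hy)) (hupos x₀ hx₀K)] at hratio
  linarith [mul_comm (w y) (u x₀)]

section EuclideanSpace

variable {N : ℕ}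

lemma laplacian_nonneg_of_isLocalMin {g : EuclideanSpace ℝ (Fin N) → ℝ}
    {x : EuclideanSpace ℝ (Fin N)} (hg : ContDiff ℝ 2 g) (h : IsLocalMin g x) :
    0 ≤ laplacian g x :=
  Finset.sum_nonneg fun _ _ => iteratedFDeriv_two_nonneg_of_isLocalMin hg h _

lemma laplacian_const_mul_sub_const_mul {u w : EuclideanSpace ℝ (Fin N) → ℝ}
    (hu : ContDiff ℝ 2 u) (hw : ContDiff ℝ 2 w) (a b : ℝ) (x : EuclideanSpace ℝ (Fin N)) :
    laplacian (fun y => a * u y - b * w y) x = a * laplacian u x - b * laplacian w x := by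
  have hau : ContDiffAt ℝ 2 (a • u) x := (hu.const_smul a).contDiffAt
  have hbw : ContDiffAt ℝ 2 ((-b) • w) x := (hw.const_smul (-b)).contDiffAt
  have hcomb : (fun y => a * u y - b * w y) = a • u + (-b) • w := by
    ext y
    simp only [Pi.add_apply, Pi.smul_apply, smul_eq_mul]
    ring
  unfold laplacian
  rw [Finset.mul_sum, Finset.mul_sum, ← Finset.sum_sub_distrib]
  refine Finset.sum_congr rfl fun i _ => ?_
  rw [hcomb, iteratedFDeriv_add_apply hau hbw,
    iteratedFDeriv_const_smul_apply hu.contDiffAt, iteratedFDeriv_const_smul_apply hw.contDiffAt]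
  simp only [add_apply, smul_apply, smul_eq_mul]
  ring

def closedCube (c : EuclideanSpace ℝ (Fin N)) (d : ℝ) : Set (EuclideanSpace ℝ (Fin N)) :=
  {y | ∀ i, y i ∈ Set.Icc (c i - d) (c i + d)}

def openCube (c : EuclideanSpace ℝ (Fin N)) (d : ℝ) : Set (EuclideanSpace ℝ (Fin N)) :=
  {y | ∀ i, y i ∈ Set.Ioo (c i - d) (c i + d)}

variable (c : EuclideanSpace ℝ (Fin N))

lemma isCompact_closedCube (d : ℝ) : IsCompact (closedCube c d) := by
  have hpre : closedCube c d =
      EuclideanSpace.equiv (Fin N) ℝ ⁻¹' Set.univ.pi fun i => Set.Icc (c i - d) (c i + d) := by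
    ext y
    simp only [closedCube, Set.mem_preimage, Set.mem_univ_pi, Set.mem_ofPred_eq]
    rfl
  rw [hpre]
  exact (EuclideanSpace.equiv (Fin N) ℝ).toHomeomorph.isCompact_preimage.2
    (isCompact_univ_pi fun _ => isCompact_Icc)

lemma isOpen_openCube (d : ℝ) : IsOpen (openCube c d) := by
  have hpre : openCube c d =
      EuclideanSpace.equiv (Fin N) ℝ ⁻¹' Set.univ.pi fun i => Set.Ioo (c i - d) (c i + d) := by
    ext y
    simp only [openCube, Set.mem_preimage, Set.mem_univ_pi, Set.mem_ofPred_eq]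
    rfl
  rw [hpre]
  exact (isOpen_set_pi Set.finite_univ fun _ _ => isOpen_Ioo).preimage
    (EuclideanSpace.equiv (Fin N) ℝ).continuous

lemma openCube_subset_closedCube (d : ℝ) : openCube c d ⊆ closedCube c d :=
  fun _ hy i => Set.Ioo_subset_Icc_self (hy i)

lemma self_mem_closedCube {d : ℝ} (hd : 0 ≤ d) : c ∈ closedCube c d :=
  fun _ => ⟨by linarith, by linarith⟩

noncomputable def cosProd (ε : ℝ) (x : EuclideanSpace ℝ (Fin N)) : ℝ :=
  ∏ i, cos (ε * (x i - c i))

lemma cosProd_eq_zero_of_mem_closedCube_diff {ε : ℝ} (hε : ε ≠ 0) {y : EuclideanSpace ℝ (Fin N)}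
    (hy : y ∈ closedCube c (π / (2 * ε)) \ openCube c (π / (2 * ε))) : cosProd c ε y = 0 := by
  obtain ⟨hK, hU⟩ := hy
  obtain ⟨i, hi⟩ : ∃ i, y i ∉ Set.Ioo (c i - π / (2 * ε)) (c i + π / (2 * ε)) := by
    simpa [openCube] using hU
  have hε' : ε * (π / (2 * ε)) = π / 2 := by field_simp
  refine Finset.prod_eq_zero (Finset.mem_univ i) ?_
  rcases Set.eq_endpoints_or_mem_Ioo_of_mem_Icc (hK i) with h | h | h
  · rw [h, show c i - π / (2 * ε) - c i = -(π / (2 * ε)) by ring, mul_neg, hε', cos_neg,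
      cos_pi_div_two]
  · rw [h, add_sub_cancel_left, hε', cos_pi_div_two]
  · exact absurd h hi

variable (ε : ℝ)

lemma cosProd_self : cosProd c ε c = 1 := by
  simp [cosProd]

lemma contDiff_cosProd : ContDiff ℝ 2 (cosProd c ε) :=
  contDiff_prod fun i _ => contDiff_cos.comp
    (contDiff_const.mul ((EuclideanSpace.proj (𝕜 := ℝ) i).contDiff.sub contDiff_const))

lemma cosProd_add_smul_single (x : EuclideanSpace ℝ (Fin N)) (j : Fin N) (s : ℝ) :
    cosProd c ε (x + s • EuclideanSpace.single j 1) =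
      cos (ε * (x j - c j) + ε * s) * ∏ i ∈ Finset.univ.erase j, cos (ε * (x i - c i)) := by
  rw [cosProd, ← Finset.mul_prod_erase _ _ (Finset.mem_univ j)]
  congr 1
  · simp only [PiLp.add_apply, PiLp.smul_apply, PiLp.single_apply, if_true, smul_eq_mul]
    ring_nf
  · refine Finset.prod_congr rfl fun i hi => ?_
    simp [Finset.ne_of_mem_erase hi]

lemma laplacian_cosProd (x : EuclideanSpace ℝ (Fin N)) :
    laplacian (cosProd c ε) x = -(N * ε ^ 2) * cosProd c ε x := by
  have hdir (j : Fin N) : iteratedFDeriv ℝ 2 (cosProd c ε) x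
      ![EuclideanSpace.single j 1, EuclideanSpace.single j 1] = -(ε ^ 2) * cosProd c ε x := by
    rw [iteratedFDeriv_two_apply_eq_deriv_deriv_line (contDiff_cosProd c ε),
      funext (cosProd_add_smul_single c ε x j), deriv_deriv_cos_const_add_mul_mul, cosProd,
      ← Finset.mul_prod_erase _ _ (Finset.mem_univ j)]
    ring
  simp only [laplacian, hdir, Finset.sum_const, Finset.card_univ, Fintype.card_fin, nsmul_eq_mul]
  ring

end EuclideanSpace

theorem stmt0_general (N : ℕ) (hN : 1 ≤ N) (t : ℝ)
    (V₁ : EuclideanSpace ℝ (Fin N) → ℝ)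
    (hV₁gt : ∀ x : EuclideanSpace ℝ (Fin N), t ≤ ‖x‖ → 1 < V₁ x) :
    ¬ ∃ u : EuclideanSpace ℝ (Fin N) → ℝ,
        ContDiff ℝ 2 u ∧ (∀ x, 0 < u x) ∧ (∀ x, -laplacian u x = V₁ x * u x) := by
  rintro ⟨u, hu, hupos, heq⟩
  set ε : ℝ := 1 / (N + 1)
  have hε : 0 < ε := by positivity
  set d : ℝ := π / (2 * ε)
  have hd : 0 < d := by positivity
  set i₀ : Fin N := ⟨0, hN⟩
  set c : EuclideanSpace ℝ (Fin N) := EuclideanSpace.single i₀ (t + d)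
  obtain ⟨x₀, hx₀, hwx₀, hmin⟩ := exists_isLocalMin_mul_sub_mul (isCompact_closedCube c d)
    (isOpen_openCube c d) (openCube_subset_closedCube c d) hu.continuous.continuousOn
    (contDiff_cosProd c ε).continuous.continuousOn (fun x _ => hupos x)
    (fun y hy => (cosProd_eq_zero_of_mem_closedCube_diff c hε.ne' hy).le)
    (self_mem_closedCube c hd.le) (by rw [cosProd_self]; exact one_pos)
  have hlap := laplacian_nonneg_of_isLocalMin
    ((contDiff_const.mul hu).sub (contDiff_const.mul (contDiff_cosProd c ε))) hmin
  rw [laplacian_const_mul_sub_const_mul hu (contDiff_cosProd c ε), laplacian_cosProd,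
    ← neg_neg (laplacian u x₀), heq] at hlap
  have hfar : t ≤ ‖x₀‖ := by
    have hx₀i₀ : t < x₀ i₀ := by simpa [c, i₀] using (hx₀ i₀).1
    linarith [le_abs_self (x₀ i₀), PiLp.norm_apply_le x₀ i₀, Real.norm_eq_abs (x₀ i₀)]
  have hNε : (N : ℝ) * ε ^ 2 < 1 := by
    rw [div_pow, one_pow, mul_one_div, div_lt_one (by positivity)]
    nlinarith
  nlinarith [mul_pos (mul_pos hwx₀ (hupos x₀)) (sub_pos.2 (hNε.trans (hV₁gt x₀ hfar)))]

theorem stmt0 (N : ℕ) (hN : 1 ≤ N) (t : ℝ) (ht : 0 < t)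
    (V₁ : EuclideanSpace ℝ (Fin N) → ℝ) (hV₁ : Continuous V₁)
    (hV₁gt : ∀ x : EuclideanSpace ℝ (Fin N), t ≤ ‖x‖ → 1 < V₁ x) :
    ¬ ∃ u : EuclideanSpace ℝ (Fin N) → ℝ,
        ContDiff ℝ 2 u ∧ (∀ x, 0 < u x) ∧ (∀ x, -laplacian u x = V₁ x * u x) :=
  stmt0_general N hN t V₁ hV₁gt
end

section
/- Let $(\xi_1, \dots, \xi_k)$ be bounded smooth solutions of the coupled system $-\Delta \xi_i + (1 - 3Q^2) \xi_i = -\frac{2}{k a_*} Q \sum_{l=1}^k \int_{\mathbb{R}^N} Q^3 \xi_l$, $i = 1, \dots, k$, where $Q$ is the ground state of $-\Delta Q + Q = Q^3$ in $\mathbb{R}^N$ ($N = 2, 3$) and $a_* = \int Q^2$. Assume each $\xi_i = \sum_{j=0}^N \gamma_{i,j} \psi_j$ with $\psi_0 = Q + x \cdot \nabla Q$, $\psi_j = \partial_j Q$. Then $\gamma_{i,0} = \gamma_{l,0}$ for all $i, l \in \{1, \dots, k\}$. -/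
open MeasureTheory Real Asymptotics
open scoped InnerProductSpace

namespace Stmt10Aux

variable {N : ℕ}

/-- partial derivative in direction `a` -/
noncomputable def pd (a : Fin N) (u : EuclideanSpace ℝ (Fin N) → ℝ) :
    EuclideanSpace ℝ (Fin N) → ℝ :=
  fun x => fderiv ℝ u x (EuclideanSpace.single a 1)

lemma top1 : ((⊤:ℕ∞) : WithTop ℕ∞) + 1 ≤ ((⊤:ℕ∞) : WithTop ℕ∞) := by exact_mod_cast le_top

lemma diffb {F : Type*} [NormedAddCommGroup F] [NormedSpace ℝ F]
    {u : EuclideanSpace ℝ (Fin N) → F} (hu : ContDiff ℝ (⊤:ℕ∞) u) :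
    Differentiable ℝ u := hu.differentiable (by simp)

lemma contDiff_fderiv {u : EuclideanSpace ℝ (Fin N) → ℝ} (hu : ContDiff ℝ (⊤:ℕ∞) u) :
    ContDiff ℝ (⊤:ℕ∞) (fderiv ℝ u) := hu.fderiv_right top1

lemma contDiff_pd {u : EuclideanSpace ℝ (Fin N) → ℝ} (hu : ContDiff ℝ (⊤:ℕ∞) u) (a : Fin N) :
    ContDiff ℝ (⊤:ℕ∞) (pd a u) := (contDiff_fderiv hu).clm_apply contDiff_const

lemma fderiv_pd_apply {u : EuclideanSpace ℝ (Fin N) → ℝ} (hu : ContDiff ℝ (⊤:ℕ∞) u)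
    (a : Fin N) (x v : EuclideanSpace ℝ (Fin N)) :
    fderiv ℝ (pd a u) x v = fderiv ℝ (fderiv ℝ u) x v (EuclideanSpace.single a 1) := by
  have h1 : DifferentiableAt ℝ (fderiv ℝ u) x := (diffb (contDiff_fderiv hu)) x
  have h2 := fderiv_clm_apply (c := fderiv ℝ u)
    (u := fun _ => (EuclideanSpace.single a 1 : EuclideanSpace ℝ (Fin N))) (x := x)
    h1 (differentiableAt_const _)
  have : fderiv ℝ (pd a u) x = fderiv ℝ
      (fun y => (fderiv ℝ u y) (EuclideanSpace.single a 1)) x := rfl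
  rw [this, h2]
  simp

lemma pd_pd_eq {u : EuclideanSpace ℝ (Fin N) → ℝ} (hu : ContDiff ℝ (⊤:ℕ∞) u)
    (a b : Fin N) (x : EuclideanSpace ℝ (Fin N)) :
    pd a (pd b u) x
      = fderiv ℝ (fderiv ℝ u) x (EuclideanSpace.single a 1) (EuclideanSpace.single b 1) :=
  fderiv_pd_apply hu b x _

lemma pd_comm {u : EuclideanSpace ℝ (Fin N) → ℝ} (hu : ContDiff ℝ (⊤:ℕ∞) u)
    (a b : Fin N) (x : EuclideanSpace ℝ (Fin N)) :
    pd a (pd b u) x = pd b (pd a u) x := by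
  rw [pd_pd_eq hu, pd_pd_eq hu]
  exact second_derivative_symmetric (fun y => ((diffb hu) y).hasFDerivAt)
    ((diffb (contDiff_fderiv hu)) x).hasFDerivAt _ _

lemma lap_eq {u : EuclideanSpace ℝ (Fin N) → ℝ} (hu : ContDiff ℝ (⊤:ℕ∞) u)
    (x : EuclideanSpace ℝ (Fin N)) :
    laplacian u x = ∑ a, pd a (pd a u) x := by
  unfold laplacian
  refine Finset.sum_congr rfl fun a _ => ?_
  rw [iteratedFDeriv_two_apply, pd_pd_eq hu]
  simp

lemma pd_add {f g : EuclideanSpace ℝ (Fin N) → ℝ} {x : EuclideanSpace ℝ (Fin N)}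
    (hf : DifferentiableAt ℝ f x) (hg : DifferentiableAt ℝ g x) (a : Fin N) :
    pd a (fun y => f y + g y) x = pd a f x + pd a g x := by
  simp [pd, fderiv_fun_add hf hg]

lemma pd_sub {f g : EuclideanSpace ℝ (Fin N) → ℝ} {x : EuclideanSpace ℝ (Fin N)}
    (hf : DifferentiableAt ℝ f x) (hg : DifferentiableAt ℝ g x) (a : Fin N) :
    pd a (fun y => f y - g y) x = pd a f x - pd a g x := by
  simp [pd, fderiv_fun_sub hf hg]

lemma pd_sum {ι : Type*} {s : Finset ι} {F : ι → EuclideanSpace ℝ (Fin N) → ℝ}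
    {x : EuclideanSpace ℝ (Fin N)} (hF : ∀ j ∈ s, DifferentiableAt ℝ (F j) x) (a : Fin N) :
    pd a (fun y => ∑ j ∈ s, F j y) x = ∑ j ∈ s, pd a (F j) x := by
  simp [pd, fderiv_fun_sum hF]

lemma pd_const_mul {f : EuclideanSpace ℝ (Fin N) → ℝ} {x : EuclideanSpace ℝ (Fin N)}
    (hf : DifferentiableAt ℝ f x) (c : ℝ) (a : Fin N) :
    pd a (fun y => c * f y) x = c * pd a f x := by
  simp [pd, fderiv_const_mul hf c]

lemma pd_mul {f g : EuclideanSpace ℝ (Fin N) → ℝ} {x : EuclideanSpace ℝ (Fin N)}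
    (hf : DifferentiableAt ℝ f x) (hg : DifferentiableAt ℝ g x) (a : Fin N) :
    pd a (fun y => f y * g y) x = f x * pd a g x + g x * pd a f x := by
  simp [pd, fderiv_fun_mul hf hg]

lemma pd_cube {f : EuclideanSpace ℝ (Fin N) → ℝ} {x : EuclideanSpace ℝ (Fin N)}
    (hf : Differentiable ℝ f) (a : Fin N) :
    pd a (fun y => f y ^ 3) x = 3 * f x ^ 2 * pd a f x := by
  have h1 : (fun y => f y ^ 3) = fun y => f y * (f y * f y) := by funext y; ring
  rw [h1, pd_mul (hf x) ((hf x).fun_mul (hf x)), pd_mul (hf x) (hf x)]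
  ring

lemma pd_coord (b : Fin N) (x : EuclideanSpace ℝ (Fin N)) (a : Fin N) :
    pd a (fun y => (EuclideanSpace.proj b : EuclideanSpace ℝ (Fin N) →L[ℝ] ℝ) y) x
      = if b = a then 1 else 0 := by
  show fderiv ℝ (EuclideanSpace.proj b : EuclideanSpace ℝ (Fin N) →L[ℝ] ℝ) x _ = _
  rw [ContinuousLinearMap.fderiv]
  show (EuclideanSpace.single a 1 : EuclideanSpace ℝ (Fin N)) b = _
  rw [EuclideanSpace.single_apply]

lemma clm_expand (v : EuclideanSpace ℝ (Fin N)) (φ : EuclideanSpace ℝ (Fin N) →L[ℝ] ℝ) :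
    φ v = ∑ b, v b * φ (EuclideanSpace.single b 1) := by
  have hv : v = ∑ b, v b • EuclideanSpace.single b (1:ℝ) := by
    ext j; rw [WithLp.ofLp_sum, Finset.sum_apply]; simp [EuclideanSpace.single_apply]
  conv_lhs => rw [hv]
  rw [map_sum]
  simp [smul_eq_mul]


section QLemmas

variable {N : ℕ} {Q : EuclideanSpace ℝ (Fin N) → ℝ}

lemma pd_coord' (b : Fin N) (x : EuclideanSpace ℝ (Fin N)) (a : Fin N) :
    pd a (fun y : EuclideanSpace ℝ (Fin N) => y b) x = if b = a then 1 else 0 :=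
  pd_coord b x a

lemma coord_contDiff (b : Fin N) :
    ContDiff ℝ (⊤:ℕ∞) (fun y : EuclideanSpace ℝ (Fin N) => y b) :=
  (EuclideanSpace.proj (𝕜 := ℝ) b).contDiff

lemma L2 (hQ : ContDiff ℝ (⊤:ℕ∞) Q)
    (heq : ∀ x, ∑ a, pd a (pd a Q) x = Q x - Q x ^ 3)
    (j : Fin N) (x : EuclideanSpace ℝ (Fin N)) :
    ∑ a, pd a (pd a (pd j Q)) x = pd j Q x - 3 * Q x ^ 2 * pd j Q x := by
  have h1 : ∀ a : Fin N, pd a (pd a (pd j Q)) x = pd j (pd a (pd a Q)) x := by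
    intro a
    rw [show pd a (pd j Q) = pd j (pd a Q) from funext (pd_comm hQ a j)]
    exact pd_comm (contDiff_pd hQ a) a j x
  rw [Finset.sum_congr rfl fun a _ => h1 a]
  rw [← pd_sum (fun a _ => ((diffb (contDiff_pd (contDiff_pd hQ a) a)) x)) j]
  rw [show (fun y => ∑ a, pd a (pd a Q) y) = fun y => Q y - Q y ^ 3 from funext heq]
  rw [pd_sub ((diffb hQ) x) (((diffb hQ).fun_pow 3) x) j, pd_cube (diffb hQ) j]

/-- the radial-type function `x ⋅ ∇Q` -/
noncomputable def rf (Q : EuclideanSpace ℝ (Fin N) → ℝ) : EuclideanSpace ℝ (Fin N) → ℝ :=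
  fun y => ∑ b, y b * pd b Q y

lemma rf_contDiff (hQ : ContDiff ℝ (⊤:ℕ∞) Q) : ContDiff ℝ (⊤:ℕ∞) (rf Q) :=
  ContDiff.sum fun b _ => (coord_contDiff b).mul (contDiff_pd hQ b)

lemma pd_rf (hQ : ContDiff ℝ (⊤:ℕ∞) Q) (a : Fin N) (x : EuclideanSpace ℝ (Fin N)) :
    pd a (rf Q) x = pd a Q x + ∑ b, x b * pd a (pd b Q) x := by
  unfold rf
  rw [pd_sum (fun b _ =>
    (((coord_contDiff b).mul (contDiff_pd hQ b)).differentiable (by simp)).differentiableAt) a]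
  have h2 : ∀ b : Fin N, b ∈ Finset.univ →
      pd a (fun y => y b * pd b Q y) x
        = x b * pd a (pd b Q) x + pd b Q x * (if b = a then 1 else 0) := by
    intro b _
    rw [pd_mul ((diffb (coord_contDiff b)) x) ((diffb (contDiff_pd hQ b)) x) a, pd_coord']
  rw [Finset.sum_congr rfl h2, Finset.sum_add_distrib]
  simp only [mul_ite, mul_one, mul_zero, Finset.sum_ite_eq', Finset.mem_univ, if_true]
  ring

lemma pd_pd_rf (hQ : ContDiff ℝ (⊤:ℕ∞) Q) (a : Fin N) (x : EuclideanSpace ℝ (Fin N)) :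
    pd a (pd a (rf Q)) x
      = 2 * pd a (pd a Q) x + ∑ b, x b * pd a (pd a (pd b Q)) x := by
  rw [show pd a (rf Q) = fun y => pd a Q y + ∑ b, y b * pd a (pd b Q) y from
    funext (pd_rf hQ a)]
  have hsumd : DifferentiableAt ℝ (fun y => ∑ b, y b * pd a (pd b Q) y) x :=
    (Differentiable.fun_sum fun b _ =>
      (diffb (coord_contDiff b)).fun_mul (diffb (contDiff_pd (contDiff_pd hQ b) a))) x
  rw [pd_add ((diffb (contDiff_pd hQ a)) x) hsumd a]
  rw [pd_sum (fun b _ => ((diffb (coord_contDiff b)).fun_mul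
      (diffb (contDiff_pd (contDiff_pd hQ b) a))) x) a]
  have h2 : ∀ b : Fin N, b ∈ Finset.univ →
      pd a (fun y => y b * pd a (pd b Q) y) x
        = x b * pd a (pd a (pd b Q)) x + pd a (pd b Q) x * (if b = a then 1 else 0) := by
    intro b _
    rw [pd_mul ((diffb (coord_contDiff b)) x)
      ((diffb (contDiff_pd (contDiff_pd hQ b) a)) x) a, pd_coord']
  rw [Finset.sum_congr rfl h2, Finset.sum_add_distrib]
  simp only [mul_ite, mul_one, mul_zero, Finset.sum_ite_eq', Finset.mem_univ, if_true]
  have hswap : pd a (pd a Q) x = pd a (pd a Q) x := rfl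
  rw [show ∑ b, x b * pd a (pd a (pd b Q)) x = ∑ b, x b * pd a (pd a (pd b Q)) x from rfl]
  ring

lemma lap_rf (hQ : ContDiff ℝ (⊤:ℕ∞) Q)
    (heq : ∀ x, ∑ a, pd a (pd a Q) x = Q x - Q x ^ 3)
    (x : EuclideanSpace ℝ (Fin N)) :
    ∑ a, pd a (pd a (rf Q)) x
      = 2 * (Q x - Q x ^ 3) + (1 - 3 * Q x ^ 2) * rf Q x := by
  rw [Finset.sum_congr rfl fun a _ => pd_pd_rf hQ a x, Finset.sum_add_distrib]
  rw [← Finset.mul_sum, heq, Finset.sum_comm]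
  have h3 : ∀ b : Fin N, b ∈ Finset.univ →
      ∑ a : Fin N, x b * pd a (pd a (pd b Q)) x
        = (1 - 3 * Q x ^ 2) * (x b * pd b Q x) := by
    intro b _
    rw [← Finset.mul_sum, L2 hQ heq b x]
    ring
  rw [Finset.sum_congr rfl h3, ← Finset.mul_sum]
  rfl

lemma Lpsi0 (hQ : ContDiff ℝ (⊤:ℕ∞) Q)
    (heq : ∀ x, ∑ a, pd a (pd a Q) x = Q x - Q x ^ 3)
    (x : EuclideanSpace ℝ (Fin N)) :
    -(∑ a, pd a (pd a (fun y => Q y + rf Q y)) x)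
      + (1 - 3 * Q x ^ 2) * (Q x + rf Q x) = -2 * Q x := by
  have h1 : ∀ a : Fin N, ∀ y, pd a (fun y => Q y + rf Q y) y = pd a Q y + pd a (rf Q) y :=
    fun a y => pd_add ((diffb hQ) y) ((diffb (rf_contDiff hQ)) y) a
  have h2 : ∀ a : Fin N, pd a (pd a (fun y => Q y + rf Q y)) x
      = pd a (pd a Q) x + pd a (pd a (rf Q)) x := by
    intro a
    rw [show pd a (fun y => Q y + rf Q y) = fun y => pd a Q y + pd a (rf Q) y from
      funext (h1 a)]
    exact pd_add ((diffb (contDiff_pd hQ a)) x) ((diffb (contDiff_pd (rf_contDiff hQ) a)) x) a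
  rw [Finset.sum_congr rfl fun a _ => h2 a, Finset.sum_add_distrib, heq, lap_rf hQ heq]
  ring

end QLemmas

end Stmt10Aux

open Stmt10Aux in
theorem stmt10 (N : ℕ) (hN : N = 2 ∨ N = 3) (k : ℕ) (hk : 1 ≤ k)
    (Q : EuclideanSpace ℝ (Fin N) → ℝ)
    (hQC : ContDiff ℝ (⊤ : ℕ∞) Q) (hQpos : ∀ x, 0 < Q x)
    (hdecay : ∃ C c : ℝ, 0 < C ∧ 0 < c ∧
      ∀ x, |Q x| + ‖gradient Q x‖ ≤ C * Real.exp (-c * ‖x‖))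
    (heqQ : ∀ x, -laplacian Q x + Q x = Q x ^ 3)
    (astar : ℝ) (hastar : astar = ∫ x, Q x ^ 2) (hapos : 0 < astar)
    (ξ : Fin k → EuclideanSpace ℝ (Fin N) → ℝ)
    (hbdd : ∀ i, ∃ C : ℝ, ∀ x, |ξ i x| ≤ C)
    (hsm : ∀ i, ContDiff ℝ (⊤ : ℕ∞) (ξ i))
    (ψ : Fin (N + 1) → EuclideanSpace ℝ (Fin N) → ℝ)
    (hψ0 : ψ 0 = fun x => Q x + ⟪x, gradient Q x⟫_ℝ)
    (hψs : ∀ j : Fin N, ψ j.succ = fun x => fderiv ℝ Q x (EuclideanSpace.single j 1))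
    (γ : Fin k → Fin (N + 1) → ℝ)
    (hdecomp : ∀ i x, ξ i x = ∑ j, γ i j * ψ j x)
    (hsys : ∀ i x, -laplacian (ξ i) x + (1 - 3 * Q x ^ 2) * ξ i x
      = -(2 / (k * astar)) * Q x * ∑ l, ∫ y, Q y ^ 3 * ξ l y)
    (i l : Fin k) : γ i 0 = γ l 0 := by
  classical
  have hQ : ContDiff ℝ (⊤:ℕ∞) Q := hQC.of_le (by simp)
  have heq : ∀ x, ∑ a, pd a (pd a Q) x = Q x - Q x ^ 3 := by
    intro x
    have h := heqQ x
    rw [lap_eq hQ x] at h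
    linarith
  -- identify ψ 0 and ψ j.succ
  have hψ0' : ψ 0 = fun x => Q x + rf Q x := by
    rw [hψ0]; funext x; congr 1
    rw [real_inner_comm]
    have hg : ⟪gradient Q x, x⟫_ℝ = fderiv ℝ Q x x := by
      simp [gradient, InnerProductSpace.toDual_symm_apply]
    rw [hg, clm_expand x (fderiv ℝ Q x)]
    rfl
  have hψs' : ∀ j : Fin N, ψ j.succ = pd j Q := fun j => hψs j
  have hψsm : ∀ j : Fin (N+1), ContDiff ℝ (⊤:ℕ∞) (ψ j) := by
    intro j
    refine Fin.cases ?_ ?_ j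
    · rw [hψ0']; exact hQ.add (rf_contDiff hQ)
    · intro j; rw [hψs' j]; exact contDiff_pd hQ j
  -- value of the linearized operator on each ψ j
  have hL0 : ∀ x, -(∑ a, pd a (pd a (ψ 0)) x) + (1 - 3 * Q x ^ 2) * ψ 0 x = -2 * Q x := by
    intro x
    rw [hψ0']
    exact Lpsi0 hQ heq x
  have hLs : ∀ (j : Fin N) x,
      -(∑ a, pd a (pd a (ψ j.succ)) x) + (1 - 3 * Q x ^ 2) * ψ j.succ x = 0 := by
    intro j x
    rw [hψs' j, L2 hQ heq j x]
    ring
  -- key computation for each solution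
  have key : ∀ m : Fin k, ∀ x, -laplacian (ξ m) x + (1 - 3 * Q x ^ 2) * ξ m x
      = γ m 0 * (-2 * Q x) := by
    intro m x
    have hξfun : ξ m = fun y => ∑ j, γ m j * ψ j y := funext (hdecomp m)
    have hsmooth : ContDiff ℝ (⊤:ℕ∞) (fun y => ∑ j, γ m j * ψ j y) :=
      ContDiff.sum fun j _ => contDiff_const.mul (hψsm j)
    rw [hξfun, lap_eq hsmooth]
    have hcombo : ∀ a : Fin N,
        pd a (pd a (fun y => ∑ j, γ m j * ψ j y)) x
          = ∑ j, γ m j * pd a (pd a (ψ j)) x := by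
      intro a
      have h1 : pd a (fun y => ∑ j, γ m j * ψ j y)
          = fun y => ∑ j, γ m j * pd a (ψ j) y := by
        funext z
        rw [pd_sum (fun j _ => ((diffb (contDiff_const.mul (hψsm j))) z)) a]
        exact Finset.sum_congr rfl fun j _ => pd_const_mul ((diffb (hψsm j)) z) _ a
      rw [h1, pd_sum (fun j _ =>
        ((diffb (contDiff_const.mul (contDiff_pd (hψsm j) a))) x)) a]
      exact Finset.sum_congr rfl fun j _ =>
        pd_const_mul ((diffb (contDiff_pd (hψsm j) a)) x) _ a
    rw [Finset.sum_congr rfl fun a _ => hcombo a]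
    have expand : -(∑ a : Fin N, ∑ j, γ m j * pd a (pd a (ψ j)) x)
        + (1 - 3 * Q x ^ 2) * (∑ j, γ m j * ψ j x)
        = ∑ j, γ m j * (-(∑ a : Fin N, pd a (pd a (ψ j)) x)
            + (1 - 3 * Q x ^ 2) * ψ j x) := by
      rw [Finset.sum_comm, Finset.mul_sum, ← Finset.sum_neg_distrib,
        ← Finset.sum_add_distrib]
      exact Finset.sum_congr rfl fun j _ => by rw [← Finset.mul_sum]; ring
    rw [expand, Fin.sum_univ_succ]
    rw [hL0 x]
    rw [Finset.sum_congr rfl fun j (_ : j ∈ Finset.univ) => by rw [hLs j x]]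
    simp
  have h := (key i 0).symm.trans ((hsys i 0).trans ((hsys l 0).symm.trans (key l 0)))
  have hQ0 := hQpos 0
  have hne : (-2 : ℝ) * Q 0 ≠ 0 := by nlinarith
  exact mul_right_cancel₀ hne h
end

section
/- Let $F(x) = \sum_{j=1}^N \frac{x_j^2}{a_j^2} - 1$ with $a_j > 0$ pairwise distinct, let $\Gamma = \{F = 0\}$ be the ellipsoid, and $V = F^2 + 1$ near $\Gamma$. Then the critical points of the restriction of $\Delta V$ to $\Gamma$ are exactly the $2N$ points $(\pm a_1, 0, \dots, 0), \dots, (0, \dots, 0, \pm a_N)$. -/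
/-!
With `w i = (a i ^ 2)⁻¹`, both `F` and `ΔV` are diagonal quadratic forms plus constants:
`ΔV = 2 F ΔF + 2 |∇F|² = ∑ (4 ∑ w + 8 w i) * w i * x i ^ 2 + const`. For diagonal forms
`∇Q_u = λ ∇Q_w` says `u i = λ w i` wherever `x i ≠ 0`, i.e. `4 ∑ w + 8 w i = λ`. Since the `a i`
are distinct this singles out one coordinate, so a critical point lies on a coordinate axis,
which meets the ellipsoid exactly at `± a j`.
-/

open MeasureTheory Real Asymptotics
open scoped InnerProductSpace

section Diagonal

variable {ι : Type*} [Fintype ι]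

def diagQuad (w : ι → ℝ) (x : EuclideanSpace ℝ ι) : ℝ := ∑ i, w i * x i ^ 2

noncomputable def diagBilin (w : ι → ℝ) :
    EuclideanSpace ℝ ι →L[ℝ] EuclideanSpace ℝ ι →L[ℝ] ℝ :=
  ∑ i, (w i • EuclideanSpace.proj (𝕜 := ℝ) i).smulRight (EuclideanSpace.proj i)

@[simp]
lemma diagBilin_apply (w : ι → ℝ) (x v : EuclideanSpace ℝ ι) :
    diagBilin w x v = ∑ i, w i * x i * v i := by
  simp [diagBilin, mul_assoc]

lemma hasFDerivAt_diagQuad (w : ι → ℝ) (x : EuclideanSpace ℝ ι) :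
    HasFDerivAt (diagQuad w) (diagBilin (fun i => 2 * w i) x) x := by
  have hcoord (i : ι) : HasFDerivAt (fun y : EuclideanSpace ℝ ι => w i * y i ^ 2)
      ((w i * (2 * x i)) • EuclideanSpace.proj (𝕜 := ℝ) i) x := by
    simpa [smul_smul] using
      ((EuclideanSpace.proj (𝕜 := ℝ) i).hasFDerivAt (x := x).pow 2).const_mul (w i)
  refine (HasFDerivAt.fun_sum fun i _ => hcoord i).congr_fderiv ?_
  ext v
  simp only [sum_apply, smul_apply, PiLp.proj_apply,
    smul_eq_mul, diagBilin_apply]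
  exact Finset.sum_congr rfl fun i _ => by ring

lemma toDual_toLp_mul (w : ι → ℝ) (x : EuclideanSpace ℝ ι) :
    InnerProductSpace.toDual ℝ (EuclideanSpace ℝ ι) (WithLp.toLp 2 fun i => w i * x i)
      = diagBilin w x := by
  ext v
  simp [PiLp.inner_apply, mul_comm]

lemma hasGradientAt_diagQuad_add_const (w : ι → ℝ) (c : ℝ) (x : EuclideanSpace ℝ ι) :
    HasGradientAt (fun y => diagQuad w y + c) (WithLp.toLp 2 fun i => 2 * w i * x i) x := by
  rw [hasGradientAt_iff_hasFDerivAt, toDual_toLp_mul]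
  exact (hasFDerivAt_diagQuad w x).add_const c

lemma gradient_diagQuad_add_const (w : ι → ℝ) (c : ℝ) (x : EuclideanSpace ℝ ι) :
    gradient (fun y => diagQuad w y + c) x = WithLp.toLp 2 fun i => 2 * w i * x i :=
  (hasGradientAt_diagQuad_add_const w c x).gradient

lemma gradient_eq_smul_gradient_diagQuad_iff {u w : ι → ℝ} {c d lam : ℝ}
    {x : EuclideanSpace ℝ ι} :
    gradient (fun y => diagQuad u y + c) x = lam • gradient (fun y => diagQuad w y + d) x ↔
      ∀ i, x i ≠ 0 → u i = lam * w i := by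
  simp only [gradient_diagQuad_add_const, ← WithLp.toLp_smul, (WithLp.toLp_injective 2).eq_iff,
    funext_iff, Pi.smul_apply, smul_eq_mul]
  refine forall_congr' fun i => ?_
  by_cases hx : x i = 0
  · simp [hx]
  · rw [imp_iff_right hx, show lam * (2 * w i * x i) = 2 * (lam * w i) * x i by ring,
      mul_left_inj' hx, mul_right_inj' two_ne_zero]

end Diagonal

section SecondDerivative

variable {E : Type*} [NormedAddCommGroup E] [NormedSpace ℝ E]

lemma fderiv_fderiv_sq_add_const {f : E → ℝ} {L : E →L[ℝ] E →L[ℝ] ℝ}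
    (hf : ∀ x, HasFDerivAt f (L x) x) (c : ℝ) (x : E) :
    fderiv ℝ (fderiv ℝ fun y => f y ^ 2 + c) x =
      (2 * f x) • L + ((2 : ℝ) • L x).smulRight (L x) := by
  have hfirst : fderiv ℝ (fun y => f y ^ 2 + c) = fun y => (2 * f y) • L y := by
    funext y
    simpa using (((hf y).pow 2).add_const c).fderiv
  rw [hfirst]
  exact (((hf x).const_mul 2).smul L.hasFDerivAt).fderiv

end SecondDerivative

lemma laplacian_sq_add_const {N : ℕ} {f : EuclideanSpace ℝ (Fin N) → ℝ}
    {L : EuclideanSpace ℝ (Fin N) →L[ℝ] EuclideanSpace ℝ (Fin N) →L[ℝ] ℝ}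
    (hf : ∀ x, HasFDerivAt f (L x) x) (c : ℝ) (x : EuclideanSpace ℝ (Fin N)) :
    laplacian (fun y => f y ^ 2 + c) x =
      ∑ i, (2 * f x * L (EuclideanSpace.single i 1) (EuclideanSpace.single i 1)
        + 2 * L x (EuclideanSpace.single i 1) ^ 2) := by
  simp only [laplacian, iteratedFDeriv_two_apply, Matrix.cons_val_zero, Matrix.cons_val_one,
    fderiv_fderiv_sq_add_const hf]
  simp [sq, mul_assoc]

lemma laplacian_diagQuad_add_const_sq {N : ℕ} (w : Fin N → ℝ) (c : ℝ) :
    laplacian (fun y => (diagQuad w y + c) ^ 2 + 1) =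
      fun x => diagQuad (fun i => (4 * ∑ j, w j + 8 * w i) * w i) x + 4 * (∑ j, w j) * c := by
  funext x
  rw [laplacian_sq_add_const (fun x => (hasFDerivAt_diagQuad w x).add_const c)]
  simp only [diagBilin_apply, PiLp.single_apply, mul_ite, mul_one, mul_zero,
    Finset.sum_ite_eq', Finset.mem_univ, if_true]
  have hquad : diagQuad (fun i => (4 * ∑ j, w j + 8 * w i) * w i) x
      = 4 * (∑ j, w j) * diagQuad w x + ∑ i, 8 * w i ^ 2 * x i ^ 2 := by
    simp only [diagQuad, Finset.mul_sum, ← Finset.sum_add_distrib]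
    exact Finset.sum_congr rfl fun i _ => by ring
  have hgrad : ∑ i, 2 * (2 * w i * x i) ^ 2 = ∑ i, 8 * w i ^ 2 * x i ^ 2 :=
    Finset.sum_congr rfl fun i _ => by ring
  rw [hquad, Finset.sum_add_distrib, hgrad, ← Finset.mul_sum, ← Finset.mul_sum]
  ring

section Axes

variable {ι : Type*} [DecidableEq ι]

lemma eq_single_of_forall_ne_zero_imp_eq {r : ι → ℝ} (hr : Function.Injective r)
    {x : EuclideanSpace ℝ ι} {lam : ℝ} (h : ∀ i, x i ≠ 0 → r i = lam) {j : ι} (hj : x j ≠ 0) :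
    x = EuclideanSpace.single j (x j) := by
  ext i
  rw [PiLp.single_apply]
  split_ifs with hij
  · rw [hij]
  · by_contra hi
    exact hij (hr ((h i hi).trans (h j hj).symm))

variable [Fintype ι]

lemma diagQuad_single (w : ι → ℝ) (j : ι) (t : ℝ) :
    diagQuad w (EuclideanSpace.single j t) = w j * t ^ 2 := by
  simp [diagQuad, PiLp.single_apply]

lemma diagQuad_inv_sq_eq_one_and_lagrange_iff {a : ι → ℝ} (ha : ∀ j, 0 < a j) {r : ι → ℝ}
    (hr : Function.Injective r) {x : EuclideanSpace ℝ ι} :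
    (diagQuad (fun j => (a j ^ 2)⁻¹) x = 1 ∧ ∃ lam, ∀ i, x i ≠ 0 → r i = lam) ↔
      ∃ j, x = EuclideanSpace.single j (a j) ∨ x = EuclideanSpace.single j (-a j) := by
  constructor
  · rintro ⟨hx, lam, hlam⟩
    obtain ⟨j, hj⟩ : ∃ j, x j ≠ 0 := by
      by_contra! h0
      simp [diagQuad, h0] at hx
    have hxj := eq_single_of_forall_ne_zero_imp_eq hr hlam hj
    rw [hxj, diagQuad_single, inv_mul_eq_one₀ (pow_ne_zero 2 (ha j).ne'), eq_comm,
      sq_eq_sq_iff_eq_or_eq_neg] at hx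
    exact ⟨j, hx.imp (fun h => hxj.trans (congrArg _ h)) (fun h => hxj.trans (congrArg _ h))⟩
  · rintro ⟨j, hx⟩
    obtain ⟨t, ht, rfl⟩ : ∃ t, t ^ 2 = a j ^ 2 ∧ x = EuclideanSpace.single j t :=
      hx.elim (fun h => ⟨_, rfl, h⟩) (fun h => ⟨_, neg_sq _, h⟩)
    refine ⟨?_, r j, fun i hi => ?_⟩
    · rw [diagQuad_single, ht, inv_mul_cancel₀ (pow_ne_zero 2 (ha j).ne')]
    · obtain rfl : i = j := by
        by_contra hij
        simp [hij] at hi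
      rfl

end Axes

theorem stmt11_general (N : ℕ) (a : Fin N → ℝ) (ha : ∀ j, 0 < a j)
    (hdist : ∀ j l, j ≠ l → a j ≠ a l)
    (F V : EuclideanSpace ℝ (Fin N) → ℝ)
    (hF : F = fun x => ∑ j, x j ^ 2 / a j ^ 2 - 1)
    (hV : V = fun x => F x ^ 2 + 1) :
    {x : EuclideanSpace ℝ (Fin N) | F x = 0 ∧
        ∃ lam : ℝ, gradient (laplacian V) x = lam • gradient F x}
      = {x : EuclideanSpace ℝ (Fin N) | ∃ j : Fin N,
          x = EuclideanSpace.single j (a j) ∨ x = EuclideanSpace.single j (-(a j))} := by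
  set w : Fin N → ℝ := fun j => (a j ^ 2)⁻¹
  set r : Fin N → ℝ := fun i => 4 * ∑ j, w j + 8 * w i
  have hw (i : Fin N) : w i ≠ 0 := inv_ne_zero (pow_ne_zero 2 (ha i).ne')
  have hr : Function.Injective r := by
    intro i l hil
    by_contra hne
    have hsq : a i ^ 2 = a l ^ 2 := by simpa [r, w] using hil
    exact hdist i l hne ((sq_eq_sq₀ (ha i).le (ha l).le).mp hsq)
  have hFw : F = fun x => diagQuad w x + -1 := by
    rw [hF]
    simp only [diagQuad, w, div_eq_inv_mul, sub_eq_add_neg]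
  have hΔV : laplacian V = fun x => diagQuad (fun i => r i * w i) x + 4 * (∑ j, w j) * -1 := by
    rw [hV, hFw]
    exact laplacian_diagQuad_add_const_sq w (-1)
  ext x
  rw [Set.mem_ofPred_eq, Set.mem_ofPred_eq, ← diagQuad_inv_sq_eq_one_and_lagrange_iff ha hr, hΔV,
    hFw, add_neg_eq_zero]
  simp only [gradient_eq_smul_gradient_diagQuad_iff, mul_left_inj' (hw _), w]

theorem stmt11 (N : ℕ) (hN : 2 ≤ N) (a : Fin N → ℝ) (ha : ∀ j, 0 < a j)
    (hdist : ∀ j l, j ≠ l → a j ≠ a l)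
    (F V : EuclideanSpace ℝ (Fin N) → ℝ)
    (hF : F = fun x => ∑ j, x j ^ 2 / a j ^ 2 - 1)
    (hV : V = fun x => F x ^ 2 + 1) :
    {x : EuclideanSpace ℝ (Fin N) | F x = 0 ∧
        ∃ lam : ℝ, gradient (laplacian V) x = lam • gradient F x}
      = {x : EuclideanSpace ℝ (Fin N) | ∃ j : Fin N,
          x = EuclideanSpace.single j (a j) ∨ x = EuclideanSpace.single j (-(a j))} :=
  stmt11_general N a ha hdist F V hF hV
end
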